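/- arXiv:2304.04153 — 2 statements merged into one kernel-verified Lean document; each statement's English description precedes it below -/
import Mathlib

section
/- Consider a two-player game with strategy sets X, Y and continuously differentiable payoffs θ_x(x,y), θ_y(x,y). Every Minty Nash equilibrium is a Nash equilibrium, provided X and Y are convex and closed. -/
open scoped RealInnerProductSpace

theorem Convex.isMinOn_of_minty {E : Type*} [NormedAddCommGroup E] [InnerProductSpace ℝ E]
    [CompleteSpace E] {K : Set E} (hK : Convex ℝ K) {f : E → ℝ} (hf : Differentiable ℝ f)
    {x₀ : E} (hx₀ : x₀ ∈ K) (hminty : ∀ x ∈ K, ⟪gradient f x, x - x₀⟫ ≥ 0) :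
    IsMinOn f K x₀ := by
  intro x hx
  set v := x - x₀
  have hderiv (t : ℝ) :
      HasDerivAt (fun t : ℝ => f (x₀ + t • v)) ⟪gradient f (x₀ + t • v), v⟫ t := by
    have hline : HasDerivAt (fun t : ℝ => x₀ + t • v) v t := by
      simpa using ((hasDerivAt_id t).smul_const v).const_add x₀
    rw [inner_gradient_left]
    exact (hf _).hasFDerivAt.comp_hasDerivAt t hline
  obtain ⟨c, ⟨hc0, hc1⟩, hslope⟩ := exists_hasDerivAt_eq_slope _ _ zero_lt_one
    (fun t _ => (hderiv t).continuousAt.continuousWithinAt) (fun t _ => hderiv t)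
  -- The Minty inequality at the intermediate point `x₀ + c • v` is `c` times the slope.
  have hmem : x₀ + c • v ∈ K := by
    simpa [v, AffineMap.lineMap_apply_module', add_comm] using
      hK.lineMap_mem hx₀ hx ⟨hc0.le, hc1.le⟩
  have hc : 0 ≤ c * ⟪gradient f (x₀ + c • v), v⟫ := by
    simpa [real_inner_smul_right] using hminty _ hmem
  have hslope_nonneg : 0 ≤ ⟪gradient f (x₀ + c • v), v⟫ := nonneg_of_mul_nonneg_right hc hc0
  simp only [zero_smul, add_zero, one_smul, sub_zero, div_one, v, add_sub_cancel] at hslope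
  exact sub_nonneg.mp (hslope ▸ hslope_nonneg)

theorem stmt_8_general {n m : ℕ} (X : Set (EuclideanSpace ℝ (Fin n))) (Y : Set (EuclideanSpace ℝ (Fin m)))
    (θx : EuclideanSpace ℝ (Fin n) → EuclideanSpace ℝ (Fin m) → ℝ)
    (θy : EuclideanSpace ℝ (Fin n) → EuclideanSpace ℝ (Fin m) → ℝ)
    (hθx : ∀ y, ContDiff ℝ 1 (fun x => θx x y))
    (hθy : ∀ x, ContDiff ℝ 1 (fun y => θy x y))
    (hXconv : Convex ℝ X) (hYconv : Convex ℝ Y)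
    (xs : EuclideanSpace ℝ (Fin n)) (ys : EuclideanSpace ℝ (Fin m))
    (hxs : xs ∈ X) (hys : ys ∈ Y)
    (hMNEx : ∀ x ∈ X, ⟪gradient (fun u => θx u ys) x, x - xs⟫ ≥ 0)
    (hMNEy : ∀ y ∈ Y, ⟪gradient (fun v => θy xs v) y, y - ys⟫ ≥ 0) :
    (∀ x ∈ X, θx xs ys ≤ θx x ys) ∧ (∀ y ∈ Y, θy xs ys ≤ θy xs y) :=
  ⟨hXconv.isMinOn_of_minty ((hθx ys).differentiable one_ne_zero) hxs hMNEx,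
    hYconv.isMinOn_of_minty ((hθy xs).differentiable one_ne_zero) hys hMNEy⟩

/-- Every Minty Nash equilibrium of a two-player game with continuously differentiable
payoffs and closed convex strategy sets is a Nash equilibrium. -/
theorem stmt_8 {n m : ℕ} (X : Set (EuclideanSpace ℝ (Fin n))) (Y : Set (EuclideanSpace ℝ (Fin m)))
    (θx : EuclideanSpace ℝ (Fin n) → EuclideanSpace ℝ (Fin m) → ℝ)
    (θy : EuclideanSpace ℝ (Fin n) → EuclideanSpace ℝ (Fin m) → ℝ)
    (hθx : ∀ y, ContDiff ℝ 1 (fun x => θx x y))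
    (hθy : ∀ x, ContDiff ℝ 1 (fun y => θy x y))
    (hXcl : IsClosed X) (hXconv : Convex ℝ X) (hYcl : IsClosed Y) (hYconv : Convex ℝ Y)
    (xs : EuclideanSpace ℝ (Fin n)) (ys : EuclideanSpace ℝ (Fin m))
    (hxs : xs ∈ X) (hys : ys ∈ Y)
    (hMNEx : ∀ x ∈ X, ⟪gradient (fun u => θx u ys) x, x - xs⟫ ≥ 0)
    (hMNEy : ∀ y ∈ Y, ⟪gradient (fun v => θy xs v) y, y - ys⟫ ≥ 0) :
    (∀ x ∈ X, θx xs ys ≤ θx x ys) ∧ (∀ y ∈ Y, θy xs ys ≤ θy xs y) :=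
  stmt_8_general X Y θx θy hθx hθy hXconv hYconv xs ys hxs hys hMNEx hMNEy
end

section
/- For the extra-gradient iteration x^{k+0.5} := Proj_X(x^k - tF(x^k)), x^{k+1} := Proj_X(x^k - tF(x^{k+0.5})) over a closed convex set X, with F L-Lipschitz and 0 < t ≤ 1/(√2 L), for every x ∈ X: ⟨F(x^{k+0.5}), x^{k+0.5} - x⟩ + (1/(4t))‖x^{k+0.5} - x^k‖² ≤ (1/(2t))[‖x^k - x‖² - ‖x^{k+1} - x‖²]. -/
/-!
Write `z = xᵏ`, `w = xᵏ⁺¹ᐟ²`, `z' = xᵏ⁺¹`. The variational inequalities of the two projections,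
tested at `z'` and at the comparison point `y`, bound `t ⟪F w, w - y⟫` by inner products of
consecutive iterates; the three-point identity turns these into differences of squared distances.
What remains is the error term `t ⟪F w - F z, w - z'⟫ ≤ t L ‖w - z‖ ‖w - z'‖`, which the step size
`t L ≤ 1/√2` lets AM-GM absorb into `¼ ‖w - z‖² + ½ ‖w - z'‖²`.
-/

open scoped RealInnerProductSpace

section InnerProductSpace

variable {E : Type*} [NormedAddCommGroup E] [InnerProductSpace ℝ E]

theorem two_mul_inner_sub_sub_eq (a b c : E) :
    2 * ⟪b - a, c - b⟫ = ‖c - a‖ ^ 2 - ‖b - a‖ ^ 2 - ‖c - b‖ ^ 2 := by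
  have h := norm_add_sq_real (b - a) (c - b)
  rw [sub_add_sub_cancel'] at h
  linarith

/-- The variational inequality of `p = proj (z - t • g)`, tested at `y`, rearranged. -/
theorem smul_inner_le_of_inner_sub_nonneg {z g p y : E} {t : ℝ}
    (h : 0 ≤ ⟪y - p, p - (z - t • g)⟫) : t * ⟪g, p - y⟫ ≤ ⟪p - z, y - p⟫ := by
  have hexpand : ⟪y - p, p - (z - t • g)⟫ = ⟪p - z, y - p⟫ - t * ⟪g, p - y⟫ := by
    rw [show p - (z - t • g) = (p - z) + t • g by abel, inner_add_right, inner_smul_right,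
      real_inner_comm (p - z), real_inner_comm g, ← neg_sub p y, inner_neg_right,
      inner_neg_right]
    ring
  linarith

theorem extragradient_step_le {F : E → E} {L t : ℝ}
    (hLip : ∀ u v, ‖F u - F v‖ ≤ L * ‖u - v‖) (ht : 0 ≤ t) {z w z' y : E}
    (hw : 0 ≤ ⟪z' - w, w - (z - t • F z)⟫) (hz' : 0 ≤ ⟪y - z', z' - (z - t • F w)⟫) :
    t * ⟪F w, w - y⟫ + 1 / 2 * ‖w - z‖ ^ 2 + 1 / 2 * ‖w - z'‖ ^ 2 ≤
      1 / 2 * (‖z - y‖ ^ 2 - ‖z' - y‖ ^ 2) + t * L * (‖w - z‖ * ‖w - z'‖) := by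
  have hsplit : ⟪F w, w - y⟫ = ⟪F w, z' - y⟫ + ⟪F z, w - z'⟫ + ⟪F w - F z, w - z'⟫ := by
    simp only [inner_sub_left, inner_sub_right]
    ring
  have herr : ⟪F w - F z, w - z'⟫ ≤ L * (‖w - z‖ * ‖w - z'‖) :=
    calc ⟪F w - F z, w - z'⟫ ≤ ‖F w - F z‖ * ‖w - z'‖ := real_inner_le_norm _ _
      _ ≤ L * ‖w - z‖ * ‖w - z'‖ := by gcongr; exact hLip w z
      _ = L * (‖w - z‖ * ‖w - z'‖) := mul_assoc _ _ _
  have hA := smul_inner_le_of_inner_sub_nonneg hw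
  have hB := smul_inner_le_of_inner_sub_nonneg hz'
  have hC := mul_le_mul_of_nonneg_left herr ht
  have I₁ := two_mul_inner_sub_sub_eq z z' y
  have I₂ := two_mul_inner_sub_sub_eq z w z'
  rw [norm_sub_rev y z, norm_sub_rev y z'] at I₁
  rw [norm_sub_rev z' w] at I₂
  rw [hsplit]
  linarith

end InnerProductSpace

theorem mul_le_inv_sqrt_two_of_le_one_div {t L : ℝ} (ht : 0 < t)
    (htL : t ≤ 1 / (Real.sqrt 2 * L)) : t * L ≤ 1 / Real.sqrt 2 := by
  rcases le_or_gt L 0 with hL | hL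
  · exact (mul_nonpos_of_nonneg_of_nonpos ht.le hL).trans (by positivity)
  · calc t * L ≤ 1 / (Real.sqrt 2 * L) * L := by gcongr
      _ = 1 / Real.sqrt 2 := by field_simp

theorem mul_mul_le_of_le_inv_sqrt_two {c a b : ℝ} (hc : c ≤ 1 / Real.sqrt 2)
    (ha : 0 ≤ a) (hb : 0 ≤ b) : c * (a * b) ≤ 1 / 4 * a ^ 2 + 1 / 2 * b ^ 2 := by
  have hamgm := two_mul_le_add_sq (a / 2) (b / Real.sqrt 2)
  rw [div_pow b, Real.sq_sqrt zero_le_two] at hamgm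
  calc c * (a * b) ≤ 1 / Real.sqrt 2 * (a * b) := by gcongr
    _ = 2 * (a / 2) * (b / Real.sqrt 2) := by ring
    _ ≤ 1 / 4 * a ^ 2 + 1 / 2 * b ^ 2 := by linarith

theorem stmt_16_general {n : ℕ} (X : Set (EuclideanSpace ℝ (Fin n)))
    (F : EuclideanSpace ℝ (Fin n) → EuclideanSpace ℝ (Fin n))
    (L : ℝ) (hLip : ∀ u v, ‖F u - F v‖ ≤ L * ‖u - v‖)
    (t : ℝ) (ht : 0 < t) (htL : t ≤ 1 / (Real.sqrt 2 * L))
    (proj : EuclideanSpace ℝ (Fin n) → EuclideanSpace ℝ (Fin n))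
    (hprojmem : ∀ z, proj z ∈ X)
    (hproj : ∀ z, ∀ y ∈ X, ⟪y - proj z, proj z - z⟫ ≥ 0)
    (xk xh xk1 : EuclideanSpace ℝ (Fin n))
    (hhalf : xh = proj (xk - t • F xk))
    (hfull : xk1 = proj (xk - t • F xh)) :
    ∀ x ∈ X,
      ⟪F xh, xh - x⟫ + (1 / (4 * t)) * ‖xh - xk‖ ^ 2 ≤
        (1 / (2 * t)) * (‖xk - x‖ ^ 2 - ‖xk1 - x‖ ^ 2) := by
  intro x hx
  have hw : 0 ≤ ⟪xk1 - xh, xh - (xk - t • F xk)⟫ :=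
    hhalf ▸ hproj _ xk1 (hfull ▸ hprojmem _)
  have hz' : 0 ≤ ⟪x - xk1, xk1 - (xk - t • F xh)⟫ := hfull ▸ hproj _ x hx
  have hstep := extragradient_step_le hLip ht.le hw hz'
  have habsorb := mul_mul_le_of_le_inv_sqrt_two (mul_le_inv_sqrt_two_of_le_one_div ht htL)
    (norm_nonneg (xh - xk)) (norm_nonneg (xh - xk1))
  have hkey : t * ⟪F xh, xh - x⟫ + 1 / 4 * ‖xh - xk‖ ^ 2 ≤
      1 / 2 * (‖xk - x‖ ^ 2 - ‖xk1 - x‖ ^ 2) := by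
    linarith
  calc ⟪F xh, xh - x⟫ + 1 / (4 * t) * ‖xh - xk‖ ^ 2
        = (t * ⟪F xh, xh - x⟫ + 1 / 4 * ‖xh - xk‖ ^ 2) / t := by field_simp
    _ ≤ 1 / 2 * (‖xk - x‖ ^ 2 - ‖xk1 - x‖ ^ 2) / t := by gcongr
    _ = 1 / (2 * t) * (‖xk - x‖ ^ 2 - ‖xk1 - x‖ ^ 2) := by field_simp

/-- Key inequality for the extra-gradient step with `F` L-Lipschitz and `0 < t ≤ 1/(√2 L)`:
`⟨F(x^{k+0.5}), x^{k+0.5} - x⟩ + (1/(4t))‖x^{k+0.5} - x^k‖²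
  ≤ (1/(2t))[‖x^k - x‖² - ‖x^{k+1} - x‖²]` for every `x ∈ X`. -/
theorem stmt_16 {n : ℕ} (X : Set (EuclideanSpace ℝ (Fin n)))
    (F : EuclideanSpace ℝ (Fin n) → EuclideanSpace ℝ (Fin n))
    (hcl : IsClosed X) (hconv : Convex ℝ X)
    (L : ℝ) (hL : 0 < L) (hLip : ∀ u v, ‖F u - F v‖ ≤ L * ‖u - v‖)
    (t : ℝ) (ht : 0 < t) (htL : t ≤ 1 / (Real.sqrt 2 * L))
    (proj : EuclideanSpace ℝ (Fin n) → EuclideanSpace ℝ (Fin n))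
    (hprojmem : ∀ z, proj z ∈ X)
    (hproj : ∀ z, ∀ y ∈ X, ⟪y - proj z, proj z - z⟫ ≥ 0)
    (xk xh xk1 : EuclideanSpace ℝ (Fin n)) (hxk : xk ∈ X)
    (hhalf : xh = proj (xk - t • F xk))
    (hfull : xk1 = proj (xk - t • F xh)) :
    ∀ x ∈ X,
      ⟪F xh, xh - x⟫ + (1 / (4 * t)) * ‖xh - xk‖ ^ 2 ≤
        (1 / (2 * t)) * (‖xk - x‖ ^ 2 - ‖xk1 - x‖ ^ 2) :=
  stmt_16_general X F L hLip t ht htL proj hprojmem hproj xk xh xk1 hhalf hfull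
end
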